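/- arXiv:1109.0573 — 3 statements merged into one kernel-verified Lean document; each statement's English description precedes it below -/
import Mathlib

section
/- Let A₁,…,A_m be Hermitian matrices whose real span contains the identity matrix I, and let b ∈ ℝ^m. Suppose x₀ ∈ ℂⁿ is nonzero and X₀ = x₀x₀* is the unique positive semidefinite matrix of rank at most one satisfying Tr(A_k X) = b_k for all k. Then for every ε > 0, X₀ is the unique minimizer of f(X) = log det(X + εI) over the feasible set {X ⪰ 0 : Tr(A_k X) = b_k for all k}, among matrices X ≠ X₀ the value f(X) is strictly larger. -/
open Matrix
open scoped ComplexOrder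

/-! The identity lies in the real span of the `A k`, so all feasible matrices have the same
trace `t`. For `X ⪰ 0` with eigenvalues `λᵢ` we have `det (X + εI) = εⁿ ∏ (1 + λᵢ/ε)`, and
`∏ (1 + xᵢ) ≥ 1 + ∑ xᵢ` for `xᵢ ≥ 0`, with equality when at most one `xᵢ` is nonzero and strict
inequality once two are positive. So the rank-one `X₀` attains the lower bound `εⁿ (1 + t/ε)`,
while any other feasible `X` has rank at least two by the uniqueness hypothesis and exceeds it. -/

namespace Finset

variable {ι R : Type*} [CommRing R] [LinearOrder R] [IsStrictOrderedRing R]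

theorem one_add_sum_le_prod_one_add {s : Finset ι} {f : ι → R} (hf : ∀ i ∈ s, 0 ≤ f i) :
    1 + ∑ i ∈ s, f i ≤ ∏ i ∈ s, (1 + f i) := by
  classical
  induction s using Finset.induction_on with
  | empty => simp
  | insert a s ha ih =>
    have hs : ∀ i ∈ s, 0 ≤ f i := fun i hi => hf i (mem_insert_of_mem hi)
    have hfa : 0 ≤ f a := hf a (mem_insert_self a s)
    rw [sum_insert ha, prod_insert ha]
    calc 1 + (f a + ∑ i ∈ s, f i) ≤ (1 + f a) * (1 + ∑ i ∈ s, f i) := by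
          nlinarith [sum_nonneg hs]
      _ ≤ (1 + f a) * ∏ i ∈ s, (1 + f i) := by gcongr; exact ih hs

end Finset

namespace Fintype

variable {ι R : Type*} [Fintype ι]

theorem prod_one_add_eq_one_add_sum_of_card_le_one [CommSemiring R] [DecidableEq R] {f : ι → R}
    (hf : Fintype.card {i // f i ≠ 0} ≤ 1) : ∏ i, (1 + f i) = 1 + ∑ i, f i := by
  by_cases h : ∃ i, f i ≠ 0
  · obtain ⟨i, hi⟩ := h
    have hzero : ∀ j, j ≠ i → f j = 0 := fun j hji => by
      by_contra hj
      exact hji congr($(Fintype.card_le_one_iff.1 hf ⟨j, hj⟩ ⟨i, hi⟩).val)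
    rw [Finset.prod_eq_single i (fun j _ hji => by rw [hzero j hji, add_zero]) (by simp),
      Finset.sum_eq_single i (fun j _ hji => hzero j hji) (by simp)]
  · push Not at h
    simp [h]

theorem one_add_sum_lt_prod_one_add_of_one_lt_card [CommRing R] [LinearOrder R]
    [IsStrictOrderedRing R] {f : ι → R} (hf : ∀ i, 0 ≤ f i)
    (hcard : 1 < Fintype.card {i // f i ≠ 0}) : 1 + ∑ i, f i < ∏ i, (1 + f i) := by
  classical
  obtain ⟨⟨i, hi⟩, ⟨j, hj⟩, hij⟩ := Fintype.one_lt_card_iff.1 hcard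
  have hij : i ≠ j := fun h => hij (Subtype.ext h)
  have hrest : ∀ k ∈ Finset.univ.erase i, 0 ≤ f k := fun k _ => hf k
  have hpos : 0 < f i * ∑ k ∈ Finset.univ.erase i, f k :=
    mul_pos ((hf i).lt_of_ne' hi) <| ((hf j).lt_of_ne' hj).trans_le <|
      Finset.single_le_sum hrest (Finset.mem_erase.2 ⟨hij.symm, Finset.mem_univ j⟩)
  rw [← Finset.add_sum_erase _ _ (Finset.mem_univ i),
    ← Finset.mul_prod_erase _ (fun k => 1 + f k) (Finset.mem_univ i)]
  calc 1 + (f i + ∑ k ∈ Finset.univ.erase i, f k)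
      < (1 + f i) * (1 + ∑ k ∈ Finset.univ.erase i, f k) := by linarith
    _ ≤ (1 + f i) * ∏ k ∈ Finset.univ.erase i, (1 + f k) := by
      gcongr
      · linarith [hf i]
      · exact Finset.one_add_sum_le_prod_one_add hrest

end Fintype

theorem Matrix.trace_eq_of_one_mem_span {ι n S R : Type*} [Fintype n] [DecidableEq n]
    [CommSemiring S] [CommRing R] [Algebra S R] {A : ι → Matrix n n R}
    (hA : 1 ∈ Submodule.span S (Set.range A)) {Y Z : Matrix n n R}
    (h : ∀ k, (A k * Y).trace = (A k * Z).trace) : Y.trace = Z.trace := by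
  let f := traceLinearMap n S R ∘ₗ LinearMap.mulRight S (Y - Z)
  have hspan : Submodule.span S (Set.range A) ≤ LinearMap.ker f :=
    Submodule.span_le.2 <| Set.range_subset_iff.2 fun k => by
      simp [f, mul_sub, trace_sub, h k]
  simpa [f, trace_sub, sub_eq_zero] using hspan hA

namespace Matrix.IsHermitian

variable {𝕜 n : Type*} [RCLike 𝕜] [Fintype n] [DecidableEq n] {B : Matrix n n 𝕜}

theorem det_add_smul_one (hB : B.IsHermitian) (c : ℝ) :
    (B + (c : 𝕜) • 1).det = ∏ i, ((hB.eigenvalues i + c : ℝ) : 𝕜) := by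
  have hneg : B + (c : 𝕜) • 1 = -(scalar n (-c : 𝕜) - B) := by
    rw [scalar_apply, neg_sub, smul_one_eq_diagonal]; simp [sub_eq_add_neg]
  rw [hneg, det_neg, ← eval_charpoly, hB.charpoly_eq, Polynomial.eval_prod,
    ← Finset.card_univ, ← Finset.prod_const, ← Finset.prod_mul_distrib]
  simp

theorem re_det_add_smul_one (hB : B.IsHermitian) {ε : ℝ} (hε : ε ≠ 0) :
    RCLike.re (B + (ε : 𝕜) • 1).det = ε ^ Fintype.card n * ∏ i, (1 + hB.eigenvalues i / ε) := by
  rw [hB.det_add_smul_one, ← RCLike.ofReal_prod, RCLike.ofReal_re, ← Finset.card_univ,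
    ← Finset.prod_const, ← Finset.prod_mul_distrib]
  refine Finset.prod_congr rfl fun i _ => ?_
  field_simp
  ring

theorem re_trace (hB : B.IsHermitian) : RCLike.re B.trace = ∑ i, hB.eigenvalues i := by
  simp [hB.trace_eq_sum_eigenvalues]

theorem re_det_add_smul_one_of_rank_le_one (hB : B.IsHermitian) (hrank : B.rank ≤ 1) {ε : ℝ}
    (hε : ε ≠ 0) :
    RCLike.re (B + (ε : 𝕜) • 1).det = ε ^ Fintype.card n * (1 + RCLike.re B.trace / ε) := by
  rw [hB.re_det_add_smul_one hε, hB.re_trace, Finset.sum_div,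
    Fintype.prod_one_add_eq_one_add_sum_of_card_le_one]
  simpa [div_ne_zero_iff, hε, hB.rank_eq_card_non_zero_eigs] using hrank

end Matrix.IsHermitian

theorem Matrix.PosSemidef.lt_re_det_add_smul_one_of_one_lt_rank {𝕜 n : Type*} [RCLike 𝕜]
    [Fintype n] [DecidableEq n] {B : Matrix n n 𝕜} (hB : B.PosSemidef) (hrank : 1 < B.rank)
    {ε : ℝ} (hε : 0 < ε) :
    ε ^ Fintype.card n * (1 + RCLike.re B.trace / ε) < RCLike.re (B + (ε : 𝕜) • 1).det := by
  rw [hB.1.re_det_add_smul_one hε.ne', hB.1.re_trace, Finset.sum_div]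
  refine mul_lt_mul_of_pos_left (Fintype.one_add_sum_lt_prod_one_add_of_one_lt_card
    (fun i => div_nonneg (hB.eigenvalues_nonneg i) hε.le) ?_) (by positivity)
  simpa [div_ne_zero_iff, hε.ne', hB.1.rank_eq_card_non_zero_eigs] using hrank

theorem logdet_unique_minimizer_general (n m : ℕ) (A : Fin m → Matrix (Fin n) (Fin n) ℂ)
    (hI : (1 : Matrix (Fin n) (Fin n) ℂ) ∈ Submodule.span ℝ (Set.range A))
    (b : Fin m → ℝ) (x₀ : Fin n → ℂ)
    (X₀ : Matrix (Fin n) (Fin n) ℂ)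
    (hX₀ : X₀ = Matrix.of fun i j => x₀ i * (starRingEnd ℂ) (x₀ j))
    (hfeas : X₀.PosSemidef ∧ ∀ k, (A k * X₀).trace = (b k : ℂ))
    (huniq : ∀ X : Matrix (Fin n) (Fin n) ℂ, X.PosSemidef →
      (∀ k, (A k * X).trace = (b k : ℂ)) → X.rank ≤ 1 → X = X₀) :
    ∀ ε : ℝ, 0 < ε →
      ∀ X : Matrix (Fin n) (Fin n) ℂ, X.PosSemidef →
        (∀ k, (A k * X).trace = (b k : ℂ)) → X ≠ X₀ →
        Real.log ((X₀ + (ε : ℂ) • 1).det.re) <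
          Real.log ((X + (ε : ℂ) • 1).det.re) := by
  intro ε hε X hX hXfeas hne
  have hX₀rank : X₀.rank ≤ 1 := hX₀ ▸ rank_vecMulVec_le x₀ (star x₀)
  have hXrank : 1 < X.rank := by
    by_contra h
    exact hne (huniq X hX hXfeas (not_lt.1 h))
  have htrace : X₀.trace = X.trace :=
    trace_eq_of_one_mem_span hI fun k => (hfeas.2 k).trans (hXfeas k).symm
  have htrace_nonneg : 0 ≤ X₀.trace.re := (Complex.nonneg_iff.1 hfeas.1.trace_nonneg).1
  have hdet₀ : (X₀ + (ε : ℂ) • 1).det.re = ε ^ n * (1 + X₀.trace.re / ε) := by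
    simpa using hfeas.1.1.re_det_add_smul_one_of_rank_le_one hX₀rank hε.ne'
  have hdet : ε ^ n * (1 + X.trace.re / ε) < (X + (ε : ℂ) • 1).det.re := by
    simpa using hX.lt_re_det_add_smul_one_of_one_lt_rank hXrank hε
  rw [hdet₀]
  exact Real.log_lt_log (by positivity) (htrace ▸ hdet)

theorem logdet_unique_minimizer (n m : ℕ) (A : Fin m → Matrix (Fin n) (Fin n) ℂ)
    (hA : ∀ k, (A k).IsHermitian)
    (hI : (1 : Matrix (Fin n) (Fin n) ℂ) ∈ Submodule.span ℝ (Set.range A))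
    (b : Fin m → ℝ) (x₀ : Fin n → ℂ) (hx₀ : x₀ ≠ 0)
    (X₀ : Matrix (Fin n) (Fin n) ℂ)
    (hX₀ : X₀ = Matrix.of fun i j => x₀ i * (starRingEnd ℂ) (x₀ j))
    (hfeas : X₀.PosSemidef ∧ ∀ k, (A k * X₀).trace = (b k : ℂ))
    (huniq : ∀ X : Matrix (Fin n) (Fin n) ℂ, X.PosSemidef →
      (∀ k, (A k * X).trace = (b k : ℂ)) → X.rank ≤ 1 → X = X₀) :
    ∀ ε : ℝ, 0 < ε →
      ∀ X : Matrix (Fin n) (Fin n) ℂ, X.PosSemidef →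
        (∀ k, (A k * X).trace = (b k : ℂ)) → X ≠ X₀ →
        Real.log ((X₀ + (ε : ℂ) • 1).det.re) <
          Real.log ((X + (ε : ℂ) • 1).det.re) :=
  logdet_unique_minimizer_general n m A hI b x₀ X₀ hX₀ hfeas huniq
end

section
/- Let x ∈ ℂⁿ whose DFT x̂ never vanishes, and suppose gcd(s,n) = 1. Then x is uniquely determined up to a global unimodular phase factor by the 3n real numbers |F x|², |F(x + Dˢx)|², |F(x − iDˢx)|², where D = diag(e^{2πit/n}, t = 0,…,n−1) and F is the unitary DFT. -/
noncomputable def dft {n : ℕ} [NeZero n] (x : ZMod n → ℂ) (k : ZMod n) : ℂ :=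
  (Real.sqrt n)⁻¹ * ∑ t : ZMod n,
    x t * Complex.exp (-(2 * Real.pi * Complex.I * (k.val : ℂ) * (t.val : ℂ)) / n)

noncomputable def modulate {n : ℕ} [NeZero n] (s : ℤ) (x : ZMod n → ℂ) : ZMod n → ℂ :=
  fun t => Complex.exp (2 * Real.pi * Complex.I * (s : ℂ) * (t.val : ℂ) / n) * x t

/-!
By polarization, `|x̂ k|²`, `|x̂ (k - s)|²`, `|x̂ k + x̂ (k - s)|²` and
`|x̂ k - i x̂ (k - s)|²` determine `x̂ k * conj (x̂ (k - s))`. If `y` produces the same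
measurements as `x`, these products and the moduli agree, which forces the ratio `ŷ k / x̂ k`
to be invariant under the shift `k ↦ k - s`. As `s` is a unit modulo `n`, this shift acts
transitively on `ZMod n`, so `ŷ = c x̂` with `|c| = 1`, and `y = c x` since the DFT is injective.
-/

open ComplexConjugate
open scoped ZMod

lemma ZMod.stdAddChar_intCast_mul_natCast {N : ℕ} [NeZero N] (a : ℤ) (b : ℕ) :
    stdAddChar ((a : ZMod N) * (b : ZMod N)) =
      Complex.exp (2 * Real.pi * Complex.I * a * b / N) := by
  rw [← Int.cast_natCast, ← Int.cast_mul, stdAddChar_coe]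
  push_cast
  ring_nf

lemma ZMod.dft_stdAddChar_mul_smul {N : ℕ} [NeZero N] {E : Type*} [AddCommGroup E]
    [Module ℂ E] (a : ZMod N) (Φ : ZMod N → E) (k : ZMod N) :
    𝓕 (fun j => ZMod.stdAddChar (a * j) • Φ j) k = 𝓕 Φ (k - a) := by
  simp only [ZMod.dft_apply, smul_smul, ← AddChar.map_add_eq_mul]
  congr! 3
  ring

lemma Function.Periodic.eq_apply_zero_of_isUnit {n : ℕ} {α : Type*} {f : ZMod n → α}
    {c : ZMod n} (hf : Function.Periodic f c) (hc : IsUnit c) (k : ZMod n) : f k = f 0 := by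
  obtain ⟨u, rfl⟩ := hc
  have hk : ((ZMod.cast (k * ((u⁻¹ : (ZMod n)ˣ) : ZMod n)) : ℤ)) • (u : ZMod n) = k := by
    rw [zsmul_eq_mul, ZMod.intCast_zmod_cast, mul_assoc, Units.inv_mul, mul_one]
  rw [← hk]
  exact hf.zsmul_eq _

lemma Complex.mul_conj_eq_of_norm_eq {a b a' b' : ℂ} (ha : ‖a‖ = ‖a'‖) (hb : ‖b‖ = ‖b'‖)
    (h₁ : ‖a + b‖ = ‖a' + b'‖) (h₂ : ‖a - I * b‖ = ‖a' - I * b'‖) :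
    a * conj b = a' * conj b' := by
  have normSq_eq {z w : ℂ} (h : ‖z‖ = ‖w‖) : normSq z = normSq w := by
    rw [← Complex.sq_norm, ← Complex.sq_norm, h]
  have re_mul_conj_I_mul (z w : ℂ) : (z * conj (I * w)).re = (z * conj w).im := by
    simp only [map_mul, conj_I, mul_re, mul_im, neg_re, neg_im, I_re, I_im, conj_re,
      conj_im]
    ring
  have hre : (a * conj b).re = (a' * conj b').re := by
    have := normSq_eq h₁
    rw [normSq_add, normSq_add, normSq_eq ha, normSq_eq hb] at this
    linarith
  have him : (a * conj b).im = (a' * conj b').im := by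
    have := normSq_eq h₂
    rw [normSq_sub, normSq_sub, normSq_eq ha, normSq_mul, normSq_mul, normSq_eq hb,
      re_mul_conj_I_mul, re_mul_conj_I_mul] at this
    linarith
  exact ext hre him

lemma Complex.div_eq_div_of_mul_conj_eq {a b a' b' : ℂ} (h : a * conj b = a' * conj b')
    (hb : ‖b‖ = ‖b'‖) (ha' : a' ≠ 0) (hb' : b' ≠ 0) : a / a' = b / b' := by
  have hb₀ : conj b ≠ 0 := by
    rwa [map_ne_zero, ← norm_ne_zero_iff, hb, norm_ne_zero_iff]
  have hnormSq : normSq b = normSq b' := by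
    simp only [normSq_eq_norm_sq, hb]
  rw [div_eq_div_iff ha' hb']
  refine mul_left_cancel₀ hb₀ ?_
  calc conj b * (a * b') = a' * (b' * conj b') := by linear_combination b' * h
    _ = a' * (b * conj b) := by rw [mul_conj, mul_conj, hnormSq]
    _ = conj b * (b * a') := by ring

section
variable {n : ℕ} [NeZero n]

lemma dft_eq_smul_zmod_dft (x : ZMod n → ℂ) : dft x = ((√n)⁻¹ : ℂ) • 𝓕 x := by
  ext k
  rw [dft, Pi.smul_apply, ZMod.dft_apply, smul_eq_mul, Complex.ofReal_inv]
  congr 1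
  refine Finset.sum_congr rfl fun t _ => ?_
  have : -(t * k) = ((-k.val : ℤ) : ZMod n) * ((t.val : ℕ) : ZMod n) := by
    push_cast [ZMod.natCast_val, ZMod.cast_id', id]
    ring
  rw [this, ZMod.stdAddChar_intCast_mul_natCast, smul_eq_mul, mul_comm]
  push_cast
  ring_nf

lemma modulate_eq_stdAddChar_mul (s : ℤ) (x : ZMod n → ℂ) :
    modulate s x = fun t => ZMod.stdAddChar ((s : ZMod n) * t) • x t := by
  ext t
  rw [modulate, smul_eq_mul, ← ZMod.stdAddChar_intCast_mul_natCast, ZMod.natCast_zmod_val]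

lemma dft_modulate (s : ℤ) (x : ZMod n → ℂ) (k : ZMod n) :
    dft (modulate s x) k = dft x (k - s) := by
  rw [dft_eq_smul_zmod_dft, dft_eq_smul_zmod_dft, modulate_eq_stdAddChar_mul, Pi.smul_apply,
    Pi.smul_apply, ZMod.dft_stdAddChar_mul_smul]

lemma dft_add_modulate (s : ℤ) (x : ZMod n → ℂ) (k : ZMod n) :
    dft (fun t => x t + modulate s x t) k = dft x k + dft x (k - s) := by
  change dft (x + modulate s x) k = _
  rw [← dft_modulate, dft_eq_smul_zmod_dft, dft_eq_smul_zmod_dft, dft_eq_smul_zmod_dft, map_add]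
  simp only [Pi.smul_apply, Pi.add_apply, smul_add]

lemma dft_sub_I_mul_modulate (s : ℤ) (x : ZMod n → ℂ) (k : ZMod n) :
    dft (fun t => x t - Complex.I * modulate s x t) k = dft x k - Complex.I * dft x (k - s) := by
  change dft (x - Complex.I • modulate s x) k = _
  rw [← dft_modulate, dft_eq_smul_zmod_dft, dft_eq_smul_zmod_dft, dft_eq_smul_zmod_dft, map_sub,
    map_smul]
  simp only [Pi.smul_apply, Pi.sub_apply, smul_eq_mul]
  ring

lemma dft_injective : Function.Injective (dft : (ZMod n → ℂ) → ZMod n → ℂ) := by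
  intro x y h
  simp only [dft_eq_smul_zmod_dft] at h
  have hn : ((√n)⁻¹ : ℂ) ≠ 0 := by simp [NeZero.ne n]
  exact ZMod.dft.injective (smul_right_injective _ hn h)

lemma dft_const_smul (c : ℂ) (x : ZMod n → ℂ) : dft (c • x) = c • dft x := by
  rw [dft_eq_smul_zmod_dft, dft_eq_smul_zmod_dft, map_smul, smul_comm]

lemma mul_conj_dft_sub_eq_of_norm_eq {s : ℤ} {x y : ZMod n → ℂ}
    (h1 : ∀ k, ‖dft y k‖ = ‖dft x k‖)
    (h2 : ∀ k, ‖dft (fun t => y t + modulate s y t) k‖ =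
      ‖dft (fun t => x t + modulate s x t) k‖)
    (h3 : ∀ k, ‖dft (fun t => y t - Complex.I * modulate s y t) k‖ =
      ‖dft (fun t => x t - Complex.I * modulate s x t) k‖) (k : ZMod n) :
    dft y k * conj (dft y (k - s)) = dft x k * conj (dft x (k - s)) := by
  have h2k := h2 k
  have h3k := h3 k
  rw [dft_add_modulate, dft_add_modulate] at h2k
  rw [dft_sub_I_mul_modulate, dft_sub_I_mul_modulate] at h3k
  exact Complex.mul_conj_eq_of_norm_eq (h1 k) (h1 (k - s)) h2k h3k

end

theorem phase_retrieval_1D (n : ℕ) [NeZero n] (s : ℤ) (hs : Int.gcd s n = 1)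
    (x y : ZMod n → ℂ) (hx : ∀ k, dft x k ≠ 0)
    (h1 : ∀ k, ‖dft y k‖ = ‖dft x k‖)
    (h2 : ∀ k, ‖dft (fun t => y t + modulate s y t) k‖ =
               ‖dft (fun t => x t + modulate s x t) k‖)
    (h3 : ∀ k, ‖dft (fun t => y t - Complex.I * modulate s y t) k‖ =
               ‖dft (fun t => x t - Complex.I * modulate s x t) k‖) :
    ∃ c : ℂ, ‖c‖ = 1 ∧ y = fun t => c * x t := by
  have hunit : IsUnit (s : ZMod n) := (ZMod.coe_int_isUnit_iff_isCoprime s n).mpr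
    (isCoprime_comm.mp (Int.isCoprime_iff_gcd_eq_one.mpr hs))
  have hper : Function.Periodic (fun k => dft y k / dft x k) (s : ZMod n) := fun k => by
    have hprod := mul_conj_dft_sub_eq_of_norm_eq h1 h2 h3 (k + s)
    rw [add_sub_cancel_right] at hprod
    exact Complex.div_eq_div_of_mul_conj_eq hprod (h1 k) (hx _) (hx k)
  refine ⟨dft y 0 / dft x 0, ?_, dft_injective ?_⟩
  · rw [norm_div, h1, div_self (norm_ne_zero_iff.mpr (hx 0))]
  · change dft y = dft ((dft y 0 / dft x 0) • x)
    ext k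
    rw [dft_const_smul, Pi.smul_apply, smul_eq_mul, ← hper.eq_apply_zero_of_isUnit hunit k,
      div_mul_cancel₀ _ (hx k)]
end

section
/- Let n ≥ 3, s = 1 (shift by one frequency), and suppose k₀ with 1 < k₀ < n−1. There exist x, y ∈ ℂⁿ with x̂[0] = x̂[k₀] = ŷ[0] = ŷ[k₀] = 0, such that x and y produce identical measurements {|Fx|², |F(x+Dx)|², |F(x−iDx)|²}, yet y is not of the form c·x for any unimodular c. -/
/-!
Take x̂ = δ₁ + δ_{k₀+1} and ŷ = δ₁ - δ_{k₀+1}. Since Dx has spectrum x̂(· - 1), every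
measurement at frequency k only sees the pair x̂(k), x̂(k - 1). As k₀ ≢ 0, ±1 (mod n), no such pair
meets both spikes, so flipping the sign of the second spike multiplies each measured value by 1
or by -1 and all moduli agree, although y is not a unimodular multiple of x.
-/

open Complex
open scoped ZMod

lemma norm_add_unimodular_mul_eq {u₀ u₁ v₀ v₁ c : ℂ} (hc : ‖c‖ = 1)
    (h : (u₀ = 0 ∧ u₁ = 0) ∨ (v₀ = 0 ∧ v₁ = 0)) (a : ℂ) :
    ‖u₀ + c * v₀ + a * (u₁ + c * v₁)‖ = ‖u₀ + v₀ + a * (u₁ + v₁)‖ := by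
  rcases h with ⟨rfl, rfl⟩ | ⟨rfl, rfl⟩
  · calc ‖0 + c * v₀ + a * (0 + c * v₁)‖ = ‖c‖ * ‖v₀ + a * v₁‖ := by
          rw [← norm_mul]; ring_nf
      _ = ‖0 + v₀ + a * (0 + v₁)‖ := by rw [hc, one_mul]; ring_nf
  · simp

lemma single_shift_separated {G : Type*} [AddGroup G] [DecidableEq G] {a b s : G}
    (hab : a ≠ b) (hab' : a ≠ b + s) (hba : b ≠ a + s) (u v : ℂ) (k : G) :
    (Pi.single (M := fun _ => ℂ) a u k = 0 ∧ Pi.single (M := fun _ => ℂ) a u (k - s) = 0) ∨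
      (Pi.single (M := fun _ => ℂ) b v k = 0 ∧ Pi.single (M := fun _ => ℂ) b v (k - s) = 0) := by
  by_cases hk : k = a ∨ k - s = a
  · right
    have hkb : k ≠ b := by rintro rfl; grind [sub_eq_iff_eq_add]
    have hkb' : k - s ≠ b := by grind [sub_eq_iff_eq_add]
    simp [hkb, hkb']
  · left
    push Not at hk
    simp [hk.1, hk.2]

lemma ZMod.natCast_ne_natCast_of_lt {n a b : ℕ} (ha : a < n) (hb : b < n) (hab : a ≠ b) :
    (a : ZMod n) ≠ b := by
  rw [Ne, ZMod.natCast_eq_natCast_iff', Nat.mod_eq_of_lt ha, Nat.mod_eq_of_lt hb]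
  exact hab

lemma ZMod.natCast_ne_zero_ne_one_add_one_ne_zero {n k : ℕ} (hk : 1 < k) (hkn : k < n - 1) :
    (k : ZMod n) ≠ 0 ∧ (k : ZMod n) ≠ 1 ∧ (k : ZMod n) + 1 ≠ 0 := by
  refine ⟨?_, ?_, ?_⟩
  · exact_mod_cast natCast_ne_natCast_of_lt (b := 0) (by omega) (by omega) (by omega)
  · exact_mod_cast natCast_ne_natCast_of_lt (b := 1) (by omega) (by omega) (by omega)
  · exact_mod_cast natCast_ne_natCast_of_lt (a := k + 1) (b := 0) (by omega) (by omega) (by omega)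

section

variable {n : ℕ} [NeZero n]

lemma modulate_one_apply (x : ZMod n → ℂ) (t : ZMod n) :
    modulate 1 x t = ZMod.stdAddChar t * x t := by
  rw [modulate, ZMod.stdAddChar_apply, ZMod.toCircle_apply]
  push_cast
  ring_nf

lemma dft_eq_inv_sqrt_mul_dft (x : ZMod n → ℂ) (k : ZMod n) :
    dft x k = (((√n)⁻¹ : ℝ) : ℂ) * 𝓕 x k := by
  rw [dft, ZMod.dft_apply]
  congr 1
  refine Fintype.sum_congr _ _ fun t => ?_
  have hcast : -(t * k) = Int.cast (R := ZMod n) (-(k.val * t.val)) := by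
    push_cast
    simp only [ZMod.natCast_zmod_val, mul_comm]
  rw [smul_eq_mul, mul_comm (x t), hcast, ZMod.stdAddChar_coe]
  push_cast
  ring_nf

lemma dft_modulate_one (x : ZMod n → ℂ) (k : ZMod n) :
    𝓕 (modulate 1 x) k = 𝓕 x (k - 1) := by
  simp only [ZMod.dft_apply, modulate_one_apply, smul_eq_mul, ← mul_assoc,
    ← AddChar.map_add_eq_mul]
  congr! 3
  ring

lemma dft_add_mul_modulate_one (a : ℂ) (x : ZMod n → ℂ) (k : ZMod n) :
    dft (fun t => x t + a * modulate 1 x t) k =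
      (((√n)⁻¹ : ℝ) : ℂ) * (𝓕 x k + a * 𝓕 x (k - 1)) := by
  have hlin : (fun t => x t + a * modulate 1 x t) = x + a • modulate 1 x := rfl
  rw [dft_eq_inv_sqrt_mul_dft, hlin, map_add, map_smul, Pi.add_apply, Pi.smul_apply,
    dft_modulate_one, smul_eq_mul]

lemma norm_dft_add_mul_modulate_one_eq_of_separated {U V x y : ZMod n → ℂ}
    (hUV : ∀ k, (U k = 0 ∧ U (k - 1) = 0) ∨ (V k = 0 ∧ V (k - 1) = 0))
    {c : ℂ} (hc : ‖c‖ = 1) (hx : 𝓕 x = U + V) (hy : 𝓕 y = U + c • V) (a : ℂ) (k : ZMod n) :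
    ‖dft (fun t => y t + a * modulate 1 y t) k‖ = ‖dft (fun t => x t + a * modulate 1 x t) k‖ := by
  simp only [dft_add_mul_modulate_one, norm_mul, hx, hy, Pi.add_apply, Pi.smul_apply, smul_eq_mul,
    norm_add_unimodular_mul_eq hc (hUV k)]

end

theorem phase_retrieval_fails_with_vanishing_dft_general (n : ℕ) [NeZero n]
    (k₀ : ℕ) (hk₀ : 1 < k₀) (hk₀' : k₀ < n - 1) :
    ∃ x y : ZMod n → ℂ,
      dft x 0 = 0 ∧ dft x (k₀ : ZMod n) = 0 ∧
      dft y 0 = 0 ∧ dft y (k₀ : ZMod n) = 0 ∧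
      (∀ k, ‖dft y k‖ = ‖dft x k‖) ∧
      (∀ k, ‖dft (fun t => y t + modulate 1 y t) k‖ =
            ‖dft (fun t => x t + modulate 1 x t) k‖) ∧
      (∀ k, ‖dft (fun t => y t - Complex.I * modulate 1 y t) k‖ =
            ‖dft (fun t => x t - Complex.I * modulate 1 x t) k‖) ∧
      ¬ ∃ c : ℂ, ‖c‖ = 1 ∧ y = fun t => c * x t := by
  obtain ⟨hk0, hk1, hk2⟩ := ZMod.natCast_ne_zero_ne_one_add_one_ne_zero hk₀ hk₀'
  have : Nontrivial (ZMod n) := nontrivial_of_ne _ _ hk0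
  set U := Pi.single (M := fun _ => ℂ) (1 : ZMod n) 1
  set V := Pi.single (M := fun _ => ℂ) ((k₀ : ZMod n) + 1) 1
  have hsep : ∀ k, (U k = 0 ∧ U (k - 1) = 0) ∨ (V k = 0 ∧ V (k - 1) = 0) :=
    single_shift_separated (by simpa [eq_comm] using hk0) (by simpa [eq_comm] using hk2)
      (by simpa using hk1) 1 1
  have hmeas (a : ℂ) := norm_dft_add_mul_modulate_one_eq_of_separated hsep (by simp)
    (LinearEquiv.apply_symm_apply _ (U + V)) (LinearEquiv.apply_symm_apply _ (U + (-1 : ℂ) • V)) a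
  have hne : ¬ ∃ c : ℂ, ‖c‖ = 1 ∧ 𝓕⁻ (U + (-1 : ℂ) • V) = c • 𝓕⁻ (U + V) := by
    rintro ⟨c, -, hc⟩
    have hspec : U + (-1 : ℂ) • V = c • (U + V) := by
      simpa only [LinearEquiv.apply_symm_apply, map_smul] using congrArg 𝓕 hc
    have h1 := congrFun hspec 1
    have h2 := congrFun hspec ((k₀ : ZMod n) + 1)
    simp [U, V, hk0] at h1 h2
    norm_num [← h1] at h2
  refine ⟨𝓕⁻ (U + V), 𝓕⁻ (U + (-1 : ℂ) • V), ?_, ?_, ?_, ?_,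
    fun k => by simpa only [zero_mul, add_zero] using hmeas 0 k,
    fun k => by simpa only [one_mul] using hmeas 1 k,
    fun k => by simpa only [neg_mul, ← sub_eq_add_neg] using hmeas (-I) k, hne⟩
  all_goals simp [dft_eq_inv_sqrt_mul_dft, U, V, hk2.symm, hk1]

theorem phase_retrieval_fails_with_vanishing_dft (n : ℕ) [NeZero n] (hn : 3 ≤ n)
    (k₀ : ℕ) (hk₀ : 1 < k₀) (hk₀' : k₀ < n - 1) :
    ∃ x y : ZMod n → ℂ,
      dft x 0 = 0 ∧ dft x (k₀ : ZMod n) = 0 ∧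
      dft y 0 = 0 ∧ dft y (k₀ : ZMod n) = 0 ∧
      (∀ k, ‖dft y k‖ = ‖dft x k‖) ∧
      (∀ k, ‖dft (fun t => y t + modulate 1 y t) k‖ =
            ‖dft (fun t => x t + modulate 1 x t) k‖) ∧
      (∀ k, ‖dft (fun t => y t - Complex.I * modulate 1 y t) k‖ =
            ‖dft (fun t => x t - Complex.I * modulate 1 x t) k‖) ∧
      ¬ ∃ c : ℂ, ‖c‖ = 1 ∧ y = fun t => c * x t :=
  phase_retrieval_fails_with_vanishing_dft_general n k₀ hk₀ hk₀'
end
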